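/- If λ ≥ (1/n)·‖D‖_op, then every trace-norm regularized estimator Ŵ with parameter λ satisfies the in-sample prediction error bound (1/n) Σ_{t=1}^T ‖X_t (Ŵ − W)_t‖₂² ≤ 2 λ ‖Ŵ − W‖_*, where (Ŵ − W)_t denotes the t-th column of Ŵ − W. -/

import Mathlib

open MeasureTheory ProbabilityTheory Matrix

/-- The (unordered) singular values of a real `m × n` matrix, indexed by `Fin n`:
the square roots of the eigenvalues of `Aᵀ * A`. -/
noncomputable def singVals {m n : ℕ} (A : Matrix (Fin m) (Fin n) ℝ) : Fin n → ℝ :=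
  fun i => Real.sqrt ((Matrix.isHermitian_conjTranspose_mul_self A).eigenvalues i)

/-- The nuclear (trace) norm: the sum of the singular values. -/
noncomputable def nucNorm {m n : ℕ} (A : Matrix (Fin m) (Fin n) ℝ) : ℝ := ∑ i, singVals A i

/-- The Frobenius norm. -/
noncomputable def frobNorm {m n : ℕ} (A : Matrix (Fin m) (Fin n) ℝ) : ℝ :=
  Real.sqrt (∑ i, ∑ j, (A i j) ^ 2)

/-- The operator norm: the largest singular value. -/
noncomputable def opNorm {m n : ℕ} (A : Matrix (Fin m) (Fin n) ℝ) : ℝ := ⨆ i, singVals A i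

/-- `Π(Δ) = (I - U Uᵀ) Δ (I - V Vᵀ)`. -/
def projPerp {d T r : ℕ} (U : Matrix (Fin d) (Fin r) ℝ) (V : Matrix (Fin T) (Fin r) ℝ)
    (Δ : Matrix (Fin d) (Fin T) ℝ) : Matrix (Fin d) (Fin T) ℝ :=
  (1 - U * Uᵀ) * Δ * (1 - V * Vᵀ)

/-- The cone `C(r) = {Δ : ‖Π(Δ)‖_* ≤ 3 ‖Δ - Π(Δ)‖_*}`. -/
noncomputable def coneC {d T r : ℕ} (U : Matrix (Fin d) (Fin r) ℝ)
    (V : Matrix (Fin T) (Fin r) ℝ) : Set (Matrix (Fin d) (Fin T) ℝ) :=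
  {Δ | nucNorm (projPerp U V Δ) ≤ 3 * nucNorm (Δ - projPerp U V Δ)}

/-- The block-diagonal quadratic form `∑ t, Δ_tᵀ S_t Δ_t`. -/
noncomputable def quadSum {d T : ℕ} (S : Fin T → Matrix (Fin d) (Fin d) ℝ)
    (Δ : Matrix (Fin d) (Fin T) ℝ) : ℝ :=
  ∑ t, (fun i => Δ i t) ⬝ᵥ (S t).mulVec (fun i => Δ i t)

/-- The restricted strong convexity condition for the block-diagonal matrix with blocks `S t`,
on the cone `cone`, with constant `κ`. -/
def RSC {d T : ℕ} (S : Fin T → Matrix (Fin d) (Fin d) ℝ)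
    (cone : Set (Matrix (Fin d) (Fin T) ℝ)) (κ : ℝ) : Prop :=
  ∀ Δ ∈ cone, 2 * κ * (frobNorm Δ) ^ 2 ≤ quadSum S Δ

/-- The cone-restricted operator norm of the block-diagonal matrix with blocks `S t`. -/
noncomputable def coneOpNorm {d T : ℕ} (S : Fin T → Matrix (Fin d) (Fin d) ℝ)
    (cone : Set (Matrix (Fin d) (Fin T) ℝ)) : ℝ :=
  sSup {c | ∃ Δ ∈ cone, frobNorm Δ = 1 ∧ c = |quadSum S Δ|}

/-!
Write `Δ = Ŵ - W`. Comparing the objective at `Ŵ` with its value at the midpoint `Ŵ - Δ/2`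
of `Ŵ` and `W` gives `(3/4)·(1/n) ∑ ‖X_t Δ_t‖² ≤ (1/n)⟨D, Δ⟩ + (λ/2)‖Δ‖_*`, by the triangle
inequality for the nuclear norm. Trace duality `⟨D, Δ⟩ ≤ ‖D‖_op ‖Δ‖_*` bounds the noise term
by `λ‖Δ‖_*`, and the claim follows.

Both facts about the nuclear norm come from the right singular vectors `V` of a matrix `A`
(an orthonormal eigenbasis of `AᵀA`): the columns of `AV` are orthogonal with lengths the singular
values, and the partial isometry `G = A V Σ⁻¹ Vᵀ` has `‖G‖_op ≤ 1` and `⟨G, A⟩ = ‖A‖_*`.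
-/

section Columns

variable {R ι κ μ : Type*} [NonUnitalNonAssocSemiring R]

lemma col_mul [Fintype κ] (G : Matrix ι κ R) (V : Matrix κ μ R) (j : μ) :
    (G * V).col j = G *ᵥ V.col j := rfl

lemma transpose_mul_self_apply_self [Fintype ι] (B : Matrix ι κ R) (j : κ) :
    (Bᵀ * B) j j = B.col j ⬝ᵥ B.col j := rfl

end Columns

section SingularValues

variable {m k : ℕ}

noncomputable def rightSingVecs (A : Matrix (Fin m) (Fin k) ℝ) : Matrix (Fin k) (Fin k) ℝ :=
  (isHermitian_conjTranspose_mul_self A).eigenvectorUnitary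

lemma rightSingVecs_mul_transpose (A : Matrix (Fin m) (Fin k) ℝ) :
    rightSingVecs A * (rightSingVecs A)ᵀ = 1 :=
  mem_unitaryGroup_iff.mp (isHermitian_conjTranspose_mul_self A).eigenvectorUnitary.2

lemma transpose_mul_rightSingVecs (A : Matrix (Fin m) (Fin k) ℝ) :
    (rightSingVecs A)ᵀ * rightSingVecs A = 1 :=
  mem_unitaryGroup_iff'.mp (isHermitian_conjTranspose_mul_self A).eigenvectorUnitary.2

lemma singVals_nonneg (A : Matrix (Fin m) (Fin k) ℝ) (j : Fin k) : 0 ≤ singVals A j :=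
  Real.sqrt_nonneg _

lemma nucNorm_nonneg (A : Matrix (Fin m) (Fin k) ℝ) : 0 ≤ nucNorm A :=
  Finset.sum_nonneg fun j _ => singVals_nonneg A j

lemma opNorm_nonneg (A : Matrix (Fin m) (Fin k) ℝ) : 0 ≤ opNorm A :=
  Real.iSup_nonneg (singVals_nonneg A)

lemma singVals_le_opNorm (A : Matrix (Fin m) (Fin k) ℝ) (j : Fin k) : singVals A j ≤ opNorm A :=
  le_ciSup (Set.finite_range _).bddAbove j

lemma transpose_mul_self_eq_conj_diagonal (A : Matrix (Fin m) (Fin k) ℝ) :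
    Aᵀ * A = rightSingVecs A * diagonal (singVals A ^ 2) * (rightSingVecs A)ᵀ := by
  have hsq : singVals A ^ 2 = (isHermitian_conjTranspose_mul_self A).eigenvalues := by
    ext j
    exact Real.sq_sqrt (eigenvalues_conjTranspose_mul_self_nonneg A j)
  rw [hsq]
  simpa [rightSingVecs, star_eq_conjTranspose] using
    (isHermitian_conjTranspose_mul_self A).spectral_theorem

lemma mul_rightSingVecs_transpose_mul_self (A : Matrix (Fin m) (Fin k) ℝ) :
    (A * rightSingVecs A)ᵀ * (A * rightSingVecs A) = diagonal (singVals A ^ 2) := by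
  rw [transpose_mul, Matrix.mul_assoc, ← Matrix.mul_assoc Aᵀ, transpose_mul_self_eq_conj_diagonal]
  simp only [Matrix.mul_assoc, transpose_mul_rightSingVecs, Matrix.mul_one]
  rw [← Matrix.mul_assoc, transpose_mul_rightSingVecs, Matrix.one_mul]

lemma rightSingVecs_col_dotProduct_self (A : Matrix (Fin m) (Fin k) ℝ) (j : Fin k) :
    (rightSingVecs A).col j ⬝ᵥ (rightSingVecs A).col j = 1 := by
  rw [← transpose_mul_self_apply_self, transpose_mul_rightSingVecs, one_apply_eq]

lemma mulVec_rightSingVecs_col_dotProduct_self (A : Matrix (Fin m) (Fin k) ℝ) (j : Fin k) :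
    (A *ᵥ (rightSingVecs A).col j) ⬝ᵥ (A *ᵥ (rightSingVecs A).col j) = singVals A j ^ 2 := by
  rw [← col_mul, ← transpose_mul_self_apply_self, mul_rightSingVecs_transpose_mul_self,
    diagonal_apply_eq, Pi.pow_apply]

end SingularValues

section QuadraticForm

lemma mulVec_dotProduct_mulVec_self {R ι κ : Type*} [CommSemiring R] [Fintype ι] [Fintype κ]
    (G : Matrix κ ι R) (x : ι → R) :
    (G *ᵥ x) ⬝ᵥ (G *ᵥ x) = x ⬝ᵥ (Gᵀ * G) *ᵥ x := by
  rw [← mulVec_mulVec, dotProduct_mulVec x, vecMul_transpose]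

lemma dotProduct_conj_diagonal_mulVec_le {R ι : Type*} [CommRing R] [LinearOrder R]
    [IsStrictOrderedRing R] [Fintype ι] [DecidableEq ι] {V : Matrix ι ι R} (hV : V * Vᵀ = 1)
    {ν : ι → R} {c : R} (hν : ∀ j, ν j ≤ c) (x : ι → R) :
    x ⬝ᵥ (V * diagonal ν * Vᵀ) *ᵥ x ≤ c * (x ⬝ᵥ x) := by
  set z := Vᵀ *ᵥ x
  have hz : x ⬝ᵥ x = z ⬝ᵥ z := by
    rw [mulVec_dotProduct_mulVec_self, transpose_transpose, hV, one_mulVec]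
  have hquad : x ⬝ᵥ (V * diagonal ν * Vᵀ) *ᵥ x = ∑ j, ν j * z j ^ 2 := by
    rw [← mulVec_mulVec, ← mulVec_mulVec, dotProduct_mulVec, ← transpose_transpose V,
      vecMul_transpose, transpose_transpose]
    simp only [dotProduct, mulVec_diagonal, z]
    exact Finset.sum_congr rfl fun j _ => by ring
  rw [hquad, hz, dotProduct, Finset.mul_sum]
  exact Finset.sum_le_sum fun j _ => by nlinarith [sq_nonneg (z j), hν j]

end QuadraticForm

section OperatorNorm

variable {m k : ℕ}

lemma mulVec_dotProduct_self_le (G : Matrix (Fin m) (Fin k) ℝ) (x : Fin k → ℝ) :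
    (G *ᵥ x) ⬝ᵥ (G *ᵥ x) ≤ opNorm G ^ 2 * (x ⬝ᵥ x) := by
  rw [mulVec_dotProduct_mulVec_self, transpose_mul_self_eq_conj_diagonal]
  exact dotProduct_conj_diagonal_mulVec_le (rightSingVecs_mul_transpose G)
    (fun j => pow_le_pow_left₀ (singVals_nonneg G j) (singVals_le_opNorm G j) 2) x

lemma opNorm_le_of_mulVec_dotProduct_self_le {G : Matrix (Fin m) (Fin k) ℝ} {c : ℝ} (hc : 0 ≤ c)
    (h : ∀ x, (G *ᵥ x) ⬝ᵥ (G *ᵥ x) ≤ c ^ 2 * (x ⬝ᵥ x)) : opNorm G ≤ c := by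
  refine Real.iSup_le (fun j => ?_) hc
  have hj := h ((rightSingVecs G).col j)
  rw [mulVec_rightSingVecs_col_dotProduct_self, rightSingVecs_col_dotProduct_self, mul_one] at hj
  exact (pow_le_pow_iff_left₀ (singVals_nonneg G j) hc two_ne_zero).mp hj

end OperatorNorm

section Duality

variable {m k : ℕ}

lemma trace_transpose_mul_eq_sum (G A : Matrix (Fin m) (Fin k) ℝ) :
    trace (Gᵀ * A) = ∑ j, (G *ᵥ (rightSingVecs A).col j) ⬝ᵥ (A *ᵥ (rightSingVecs A).col j) := by
  set V := rightSingVecs A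
  calc trace (Gᵀ * A) = trace (Gᵀ * A * (V * Vᵀ)) := by
        rw [rightSingVecs_mul_transpose, Matrix.mul_one]
    _ = trace ((G * V)ᵀ * (A * V)) := by
        rw [← Matrix.mul_assoc, trace_mul_comm, transpose_mul]
        simp only [Matrix.mul_assoc]
    _ = _ := rfl

lemma abs_trace_transpose_mul_le (G A : Matrix (Fin m) (Fin k) ℝ) :
    |trace (Gᵀ * A)| ≤ opNorm G * nucNorm A := by
  rw [trace_transpose_mul_eq_sum, nucNorm, Finset.mul_sum]
  refine (Finset.abs_sum_le_sum_abs _ _).trans (Finset.sum_le_sum fun j _ => ?_)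
  set v := (rightSingVecs A).col j
  have hG : (G *ᵥ v) ⬝ᵥ (G *ᵥ v) ≤ opNorm G ^ 2 := by
    simpa [v, rightSingVecs_col_dotProduct_self] using mulVec_dotProduct_self_le G v
  have hCS : ((G *ᵥ v) ⬝ᵥ (A *ᵥ v)) ^ 2 ≤ ((G *ᵥ v) ⬝ᵥ (G *ᵥ v)) * ((A *ᵥ v) ⬝ᵥ (A *ᵥ v)) := by
    simpa only [dotProduct, sq] using Finset.sum_mul_sq_le_sq_mul_sq Finset.univ (G *ᵥ v) (A *ᵥ v)
  rw [mulVec_rightSingVecs_col_dotProduct_self] at hCS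
  refine abs_le_of_sq_le_sq ?_ (mul_nonneg (opNorm_nonneg G) (singVals_nonneg A j))
  calc _ ≤ opNorm G ^ 2 * singVals A j ^ 2 := hCS.trans (by gcongr)
    _ = _ := (mul_pow _ _ _).symm

lemma exists_opNorm_le_one_trace_eq_nucNorm (A : Matrix (Fin m) (Fin k) ℝ) :
    ∃ G : Matrix (Fin m) (Fin k) ℝ, opNorm G ≤ 1 ∧ trace (Gᵀ * A) = nucNorm A := by
  set V := rightSingVecs A
  set σ := singVals A
  -- `σ⁻¹` is the pseudo-inverse of the singular values, since `0⁻¹ = 0`.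
  set G := A * V * diagonal σ⁻¹ * Vᵀ
  have hgram : (A * V)ᵀ * (A * V) = diagonal (σ ^ 2) := mul_rightSingVecs_transpose_mul_self A
  refine ⟨G, opNorm_le_of_mulVec_dotProduct_self_le zero_le_one fun x => ?_, ?_⟩
  · have hGG : Gᵀ * G = V * diagonal (σ⁻¹ * σ ^ 2 * σ⁻¹) * Vᵀ := by
      have hGt : Gᵀ = V * diagonal σ⁻¹ * (A * V)ᵀ := by
        simp only [G, transpose_mul, diagonal_transpose, transpose_transpose, Matrix.mul_assoc]
      calc Gᵀ * G = V * diagonal σ⁻¹ * ((A * V)ᵀ * (A * V)) * diagonal σ⁻¹ * Vᵀ := by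
            rw [hGt]
            simp only [G, Matrix.mul_assoc]
        _ = _ := by
            rw [hgram, Matrix.mul_assoc V, diagonal_mul_diagonal', Matrix.mul_assoc V,
              diagonal_mul_diagonal']
            rfl
    rw [mulVec_dotProduct_mulVec_self, hGG, one_pow]
    refine dotProduct_conj_diagonal_mulVec_le (rightSingVecs_mul_transpose A) (fun j => ?_) x
    simp only [Pi.mul_apply, Pi.inv_apply, Pi.pow_apply]
    rcases eq_or_ne (σ j) 0 with h | h
    · simp [h]
    · exact (by field_simp : (σ j)⁻¹ * σ j ^ 2 * (σ j)⁻¹ = 1).le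
  · calc trace (Gᵀ * A) = trace (Aᵀ * G) := by
          rw [← trace_transpose, transpose_mul, transpose_transpose]
      _ = trace (Vᵀ * (Aᵀ * (A * V * diagonal σ⁻¹))) := by
          rw [show Aᵀ * G = Aᵀ * (A * V * diagonal σ⁻¹) * Vᵀ by simp only [G, Matrix.mul_assoc],
            trace_mul_comm]
      _ = trace ((A * V)ᵀ * (A * V) * diagonal σ⁻¹) := by
          simp only [transpose_mul, Matrix.mul_assoc]
      _ = nucNorm A := by
          rw [hgram, diagonal_mul_diagonal, trace_diagonal, nucNorm]
          refine Finset.sum_congr rfl fun j _ => ?_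
          rcases eq_or_ne (σ j) 0 with h | h
          · simp [σ, h]
          · simp only [Pi.pow_apply, Pi.inv_apply, σ] at h ⊢
            field_simp

lemma nucNorm_add_smul_le (A B : Matrix (Fin m) (Fin k) ℝ) (c : ℝ) :
    nucNorm (A + c • B) ≤ nucNorm A + |c| * nucNorm B := by
  obtain ⟨G, hG, hGA⟩ := exists_opNorm_le_one_trace_eq_nucNorm (A + c • B)
  have hdual (M : Matrix (Fin m) (Fin k) ℝ) : |trace (Gᵀ * M)| ≤ nucNorm M :=
    (abs_trace_transpose_mul_le G M).trans (mul_le_of_le_one_left (nucNorm_nonneg M) hG)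
  rw [← hGA, Matrix.mul_add, trace_add, Matrix.mul_smul, trace_smul, smul_eq_mul]
  calc _ ≤ |trace (Gᵀ * A)| + |c * trace (Gᵀ * B)| := add_le_add (le_abs_self _) (le_abs_self _)
    _ ≤ _ := by
      rw [abs_mul]
      gcongr
      exacts [hdual A, hdual B]

end Duality

section Regression

variable {d T n : ℕ}

lemma sum_mul_mulVec_eq_trace (X : Fin T → Matrix (Fin n) (Fin d) ℝ) (η : Fin T → Fin n → ℝ)
    (Δ : Matrix (Fin d) (Fin T) ℝ) :
    ∑ t, ∑ i, η t i * (X t *ᵥ fun a => Δ a t) i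
      = trace ((of fun a t => ∑ i, X t i a * η t i)ᵀ * Δ) := by
  simp only [trace, diag_apply, mul_apply, transpose_apply, of_apply, mulVec, dotProduct,
    Finset.mul_sum, Finset.sum_mul]
  refine Finset.sum_congr rfl fun t _ => ?_
  rw [Finset.sum_comm]
  exact Finset.sum_congr rfl fun a _ => Finset.sum_congr rfl fun i _ => by ring

lemma sum_sq_residual_eq_midpoint_add (X : Fin T → Matrix (Fin n) (Fin d) ℝ)
    (η y : Fin T → Fin n → ℝ) (W What : Matrix (Fin d) (Fin T) ℝ)
    (hy : ∀ t, y t = X t *ᵥ (fun a => W a t) + η t) :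
    ∑ t, ∑ i, (y t i - (X t *ᵥ fun a => What a t) i) ^ 2
      = ∑ t, ∑ i, (y t i - (X t *ᵥ fun a => (What + (-2⁻¹ : ℝ) • (What - W)) a t) i) ^ 2
        + 3 / 4 * ∑ t, ∑ i, ((X t *ᵥ fun a => (What - W) a t) i) ^ 2
        - ∑ t, ∑ i, η t i * (X t *ᵥ fun a => (What - W) a t) i := by
  have hmid (t : Fin T) : (X t *ᵥ fun a => (What + (-2⁻¹ : ℝ) • (What - W)) a t)
      = X t *ᵥ (fun a => What a t) + (-2⁻¹ : ℝ) • X t *ᵥ (fun a => (What - W) a t) := by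
    rw [← mulVec_smul, ← mulVec_add]; rfl
  have hdiff (t : Fin T) : (X t *ᵥ fun a => (What - W) a t)
      = X t *ᵥ (fun a => What a t) - X t *ᵥ (fun a => W a t) := by
    rw [← mulVec_sub]; rfl
  simp only [Finset.mul_sum, ← Finset.sum_add_distrib, ← Finset.sum_sub_distrib]
  refine Finset.sum_congr rfl fun t _ => Finset.sum_congr rfl fun i _ => ?_
  simp only [hmid, hdiff, hy, Pi.add_apply, Pi.sub_apply, Pi.smul_apply, smul_eq_mul]
  ring

end Regression

theorem stmt1_general {d T n : ℕ}
    (W : Matrix (Fin d) (Fin T) ℝ)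
    (X : Fin T → Matrix (Fin n) (Fin d) ℝ) (η : Fin T → Fin n → ℝ) (y : Fin T → Fin n → ℝ)
    (hy : ∀ t, y t = (X t).mulVec (fun i => W i t) + η t)
    (lam : ℝ) (hlam₀ : 0 < lam)
    -- `λ ≥ (1/n) ‖D‖_op`, where `D = ∑ t, Xᵀ_t η_t e_tᵀ`
    (hlam : (1 / (n : ℝ)) * opNorm (Matrix.of fun a t => ∑ i, X t i a * η t i) ≤ lam)
    (What : Matrix (Fin d) (Fin T) ℝ)
    -- `Ŵ` is a minimizer of the trace-norm regularized least squares objective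
    (hmin : ∀ A : Matrix (Fin d) (Fin T) ℝ,
      (n : ℝ)⁻¹ * (∑ t, ∑ i, (y t i - ((X t).mulVec fun a => What a t) i) ^ 2)
          + lam * nucNorm What ≤
        (n : ℝ)⁻¹ * (∑ t, ∑ i, (y t i - ((X t).mulVec fun a => A a t) i) ^ 2)
          + lam * nucNorm A) :
    (n : ℝ)⁻¹ * (∑ t, ∑ i, (((X t).mulVec fun a => (What - W) a t) i) ^ 2)
      ≤ 2 * lam * nucNorm (What - W) := by
  have hbasic := hmin (What + (-2⁻¹ : ℝ) • (What - W))
  rw [sum_sq_residual_eq_midpoint_add X η y W What hy] at hbasic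
  have hnuc : nucNorm (What + (-2⁻¹ : ℝ) • (What - W))
      ≤ nucNorm What + 2⁻¹ * nucNorm (What - W) := by
    simpa using nucNorm_add_smul_le What (What - W) (-2⁻¹)
  have hnoise : (n : ℝ)⁻¹ * ∑ t, ∑ i, η t i * (X t *ᵥ fun a => (What - W) a t) i
      ≤ lam * nucNorm (What - W) := by
    rw [sum_mul_mulVec_eq_trace, inv_eq_one_div]
    calc _ ≤ 1 / (n : ℝ) * (opNorm (of fun a t => ∑ i, X t i a * η t i) * nucNorm (What - W)) := by
          gcongr
          exact (le_abs_self _).trans (abs_trace_transpose_mul_le _ _)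
      _ ≤ lam * nucNorm (What - W) := by
          rw [← mul_assoc]
          exact mul_le_mul_of_nonneg_right hlam (nucNorm_nonneg _)
  have hpen := mul_le_mul_of_nonneg_left hnuc hlam₀.le
  linarith

/-- in-sample prediction error bound for the trace-norm regularized estimator
when `λ ≥ (1/n) ‖D‖_op`. -/
theorem stmt1 {d T n : ℕ} (hd : 0 < d) (hT : 0 < T) (hn : 0 < n)
    (W : Matrix (Fin d) (Fin T) ℝ)
    (X : Fin T → Matrix (Fin n) (Fin d) ℝ) (η : Fin T → Fin n → ℝ) (y : Fin T → Fin n → ℝ)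
    (hy : ∀ t, y t = (X t).mulVec (fun i => W i t) + η t)
    (lam : ℝ) (hlam₀ : 0 < lam)
    -- `λ ≥ (1/n) ‖D‖_op`, where `D = ∑ t, Xᵀ_t η_t e_tᵀ`
    (hlam : (1 / (n : ℝ)) * opNorm (Matrix.of fun a t => ∑ i, X t i a * η t i) ≤ lam)
    (What : Matrix (Fin d) (Fin T) ℝ)
    -- `Ŵ` is a minimizer of the trace-norm regularized least squares objective
    (hmin : ∀ A : Matrix (Fin d) (Fin T) ℝ,
      (n : ℝ)⁻¹ * (∑ t, ∑ i, (y t i - ((X t).mulVec fun a => What a t) i) ^ 2)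
          + lam * nucNorm What ≤
        (n : ℝ)⁻¹ * (∑ t, ∑ i, (y t i - ((X t).mulVec fun a => A a t) i) ^ 2)
          + lam * nucNorm A) :
    (n : ℝ)⁻¹ * (∑ t, ∑ i, (((X t).mulVec fun a => (What - W) a t) i) ^ 2)
      ≤ 2 * lam * nucNorm (What - W) :=
  stmt1_general W X η y hy lam hlam₀ hlam What hmin
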